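/- Let A be a self-adjoint operator in ℋ, p ∈ ℤ₊, and B ∈ C_p(A). Then for every ξ ∈ Dom(A^p) one has Bξ ∈ Dom(A^p) and A^p B ξ = Σ_{k=0}^{p} C(p,k) (ad_A^{p−k} B) A^k ξ. -/

import Mathlib

/-!
Induction on `p`. For `p = 1` the hypothesis says `⟪B ξ, A u⟫ = ⟪ad_A B ξ + B A ξ, u⟫` for all
`u ∈ Dom A`, and self-adjointness turns this into `B ξ ∈ Dom A` with
`A B ξ = ad_A B ξ + B A ξ`. The induction step applies the induction hypothesis to `B` at `A ξ`
and to `ad_A B`, using `ad_A^k (ad_A B) = ad_A^(k+1) B`. By Pascal's rule the two forms agree on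
`Dom(A^(k+1))`; they agree on `Dom(A^k)` because the operators `i t (A + i t)⁻¹`, `t = n + 1`,
are contractions mapping `Dom(A^k)` into `Dom(A^(k+1))`, commuting with `A`, and converging
strongly to the identity.
Pascal's rule then recombines `A^p (ad_A B ξ) + A^p B (A ξ)` into the claimed sum.
-/

open scoped ComplexOrder
open Classical

variable {ℋ : Type*} [NormedAddCommGroup ℋ] [InnerProductSpace ℂ ℋ] [CompleteSpace ℋ]

/-- The everywhere-defined extension (by `0` outside the domain) of an unbounded operator
`Aop` with domain the submodule `D`. -/
noncomputable def Aext (D : Submodule ℂ ℋ) (Aop : ↥D →ₗ[ℂ] ℋ) (ψ : ℋ) : ℋ :=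
  if h : ψ ∈ D then Aop ⟨ψ, h⟩ else 0

/-- `Dom(A^n)`: the set of vectors to which `A` can be applied `n` times. -/
def domPow (D : Submodule ℂ ℋ) (Aop : ↥D →ₗ[ℂ] ℋ) (n : ℕ) : Set ℋ :=
  {ψ : ℋ | ∀ k, k < n → (Aext D Aop)^[k] ψ ∈ D}

/-- The sesquilinear form `α_n(ξ,η) = Σ_{k=0}^{n} C(n,k)(−1)^k ⟨X A^k ξ, A^{n−k} η⟩`,
defined (meaningfully) on `Dom(A^n)`. -/
noncomputable def commForm (D : Submodule ℂ ℋ) (Aop : ↥D →ₗ[ℂ] ℋ)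
    (X : ℋ →L[ℂ] ℋ) (n : ℕ) (ξ η : ℋ) : ℂ :=
  ∑ k ∈ Finset.range (n + 1),
    (n.choose k : ℂ) * (-1) ^ k *
      (inner ℂ (X ((Aext D Aop)^[k] ξ)) ((Aext D Aop)^[n - k] η) : ℂ)

/-- `ad_A^n X` exists in `B(ℋ)` and equals the bounded operator `Z`: the form `α_n` is
represented by `Z` on `Dom(A^n)`. -/
def AdExistsN (D : Submodule ℂ ℋ) (Aop : ↥D →ₗ[ℂ] ℋ) (n : ℕ) (X Z : ℋ →L[ℂ] ℋ) : Prop :=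
  ∀ ξ ∈ domPow D Aop n, ∀ η ∈ domPow D Aop n,
    commForm D Aop X n ξ η = (inner ℂ (Z ξ) η : ℂ)

/-- `X ∈ C_n(A)`: the multiple commutators `ad_A^k X` exist in `B(ℋ)` for `k = 0,…,n`. -/
def InCn (D : Submodule ℂ ℋ) (Aop : ↥D →ₗ[ℂ] ℋ) (n : ℕ) (X : ℋ →L[ℂ] ℋ) : Prop :=
  ∀ k, k ≤ n → ∃ Z : ℋ →L[ℂ] ℋ, AdExistsN D Aop k X Z

/-- Self-adjointness of the (in general unbounded) operator `Aop` with domain `D`: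
it is densely defined, symmetric, and its domain is maximal. -/
def IsSelfAdjointOp (D : Submodule ℂ ℋ) (Aop : ↥D →ₗ[ℂ] ℋ) : Prop :=
  Dense (D : Set ℋ) ∧
    (∀ u v : ↥D, (inner ℂ (Aop u) (v : ℋ) : ℂ) = inner ℂ (u : ℋ) (Aop v)) ∧
    ∀ v w : ℋ, (∀ u : ↥D, (inner ℂ (Aop u) v : ℂ) = inner ℂ (u : ℋ) w) → v ∈ D

open Filter Topology Finset
open scoped InnerProductSpace

theorem Finset.sum_range_choose_succ_nsmul {M : Type*} [AddCommMonoid M] (g : ℕ → ℕ → M)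
    (n : ℕ) :
    ∑ k ∈ range (n + 1 + 1), (n + 1).choose k • g k (n + 1 - k) =
      ∑ k ∈ range (n + 1), n.choose k • g k (n - k + 1) +
        ∑ k ∈ range (n + 1), n.choose k • g (k + 1) (n - k) := by
  have h := sum_antidiagonal_choose_succ_nsmul g n
  simp only [Nat.sum_antidiagonal_eq_sum_range_succ_mk] at h
  rw [h]
  congr 1
  refine sum_congr rfl fun k hk => ?_
  rw [Nat.choose_symm (by simpa [Nat.lt_succ_iff] using hk)]

theorem tendsto_self_of_lipschitzWith_of_dense {ι X : Type*} [PseudoMetricSpace X]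
    {l : Filter ι} {F : ι → X → X} {K : NNReal} (hF : ∀ i, LipschitzWith K (F i)) {S : Set X}
    (hS : Dense S) (h : ∀ x ∈ S, Tendsto (F · x) l (𝓝 x)) (x : X) :
    Tendsto (F · x) l (𝓝 x) :=
  (LipschitzWith.uniformEquicontinuous F K hF).equicontinuous.isClosed_setOfPred_tendsto
    continuous_id |>.closure_subset_iff.2 h (hS.closure_eq ▸ Set.mem_univ x)

section UnboundedOperator

variable {H : Type*} [NormedAddCommGroup H] [InnerProductSpace ℂ H]
  {D : Submodule ℂ H} {Aop : ↥D →ₗ[ℂ] H}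

local notation "𝐀" => Aext D Aop

theorem Aext_of_mem {u : H} (hu : u ∈ D) : 𝐀 u = Aop ⟨u, hu⟩ := dif_pos hu

theorem Aext_add {u v : H} (hu : u ∈ D) (hv : v ∈ D) : 𝐀 (u + v) = 𝐀 u + 𝐀 v := by
  rw [Aext_of_mem hu, Aext_of_mem hv, Aext_of_mem (D.add_mem hu hv), ← map_add]
  rfl

theorem Aext_smul (c : ℂ) {u : H} (hu : u ∈ D) : 𝐀 (c • u) = c • 𝐀 u := by
  rw [Aext_of_mem hu, Aext_of_mem (D.smul_mem c hu), ← map_smul]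
  rfl

theorem mem_domPow_zero (ψ : H) : ψ ∈ domPow D Aop 0 := fun _ hk => absurd hk (Nat.not_lt_zero _)

theorem mem_domPow_succ_iff {ψ : H} {n : ℕ} :
    ψ ∈ domPow D Aop (n + 1) ↔ ψ ∈ D ∧ 𝐀 ψ ∈ domPow D Aop n := by
  simp only [domPow, Set.mem_ofPred_eq, Nat.forall_lt_succ_left, Function.iterate_zero, id_eq,
    Function.iterate_succ_apply]

theorem mem_domPow_one_iff {ψ : H} : ψ ∈ domPow D Aop 1 ↔ ψ ∈ D := by
  simp [mem_domPow_succ_iff, mem_domPow_zero]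

theorem domPow_antitone : Antitone (domPow D Aop) :=
  fun _ _ hmn _ hψ k hk => hψ k (lt_of_lt_of_le hk hmn)

theorem iterate_Aext_add {n : ℕ} {u v : H} (hu : u ∈ domPow D Aop n)
    (hv : v ∈ domPow D Aop n) {k : ℕ} (hk : k ≤ n) :
    𝐀^[k] (u + v) = 𝐀^[k] u + 𝐀^[k] v := by
  induction k with
  | zero => rfl
  | succ k ih =>
    simp only [Function.iterate_succ_apply']
    rw [ih (by omega), Aext_add (hu k (by omega)) (hv k (by omega))]

theorem add_mem_domPow {n : ℕ} {u v : H} (hu : u ∈ domPow D Aop n)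
    (hv : v ∈ domPow D Aop n) : u + v ∈ domPow D Aop n := fun k hk => by
  rw [iterate_Aext_add hu hv hk.le]
  exact D.add_mem (hu k hk) (hv k hk)

theorem iterate_Aext_comm {C : H → H} (hC : ∀ u ∈ D, 𝐀 (C u) = C (𝐀 u)) {k : ℕ} {ξ : H}
    (hξ : ξ ∈ domPow D Aop k) {j : ℕ} (hj : j ≤ k) : 𝐀^[j] (C ξ) = C (𝐀^[j] ξ) := by
  induction j with
  | zero => rfl
  | succ j ih =>
    rw [Function.iterate_succ_apply', ih (by omega), hC _ (hξ j (by omega)),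
      Function.iterate_succ_apply']

theorem mem_domPow_succ_of_comm {C : H → H} (hC_mem : ∀ ψ, C ψ ∈ D)
    (hC : ∀ u ∈ D, 𝐀 (C u) = C (𝐀 u)) {k : ℕ} {ξ : H} (hξ : ξ ∈ domPow D Aop k) :
    C ξ ∈ domPow D Aop (k + 1) := fun j hj => by
  rw [iterate_Aext_comm hC hξ (by omega)]
  exact hC_mem _

theorem commForm_eq_sum_nsmul (X : H →L[ℂ] H) (n : ℕ) (ξ η : H) :
    commForm D Aop X n ξ η =
      ∑ k ∈ range (n + 1), n.choose k • ((-1) ^ k * ⟪X (𝐀^[k] ξ), 𝐀^[n - k] η⟫_ℂ) := by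
  simp only [commForm, nsmul_eq_mul, mul_assoc]

theorem commForm_one (X : H →L[ℂ] H) (ξ η : H) :
    commForm D Aop X 1 ξ η = ⟪X ξ, 𝐀 η⟫_ℂ - ⟪X (𝐀 ξ), η⟫_ℂ := by
  simp [commForm, sum_range_succ, ← sub_eq_add_neg]

theorem IsSelfAdjointOp.inner_Aext_left (hA : IsSelfAdjointOp D Aop) {u v : H} (hu : u ∈ D)
    (hv : v ∈ D) : ⟪𝐀 u, v⟫_ℂ = ⟪u, 𝐀 v⟫_ℂ := by
  rw [Aext_of_mem hu, Aext_of_mem hv]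
  exact hA.2.1 ⟨u, hu⟩ ⟨v, hv⟩

theorem IsSelfAdjointOp.im_inner_Aext_self (hA : IsSelfAdjointOp D Aop) {u : H} (hu : u ∈ D) :
    (⟪𝐀 u, u⟫_ℂ).im = 0 := by
  rw [← Complex.conj_eq_iff_im, inner_conj_symm, hA.inner_Aext_left hu hu]

theorem IsSelfAdjointOp.mem_and_Aext_eq_of_inner (hA : IsSelfAdjointOp D Aop) {v w : H}
    (h : ∀ u ∈ D, ⟪𝐀 u, v⟫_ℂ = ⟪u, w⟫_ℂ) : v ∈ D ∧ 𝐀 v = w := by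
  have hv : v ∈ D := hA.2.2 v w fun u => by rw [← h u u.2, Aext_of_mem u.2]
  refine ⟨hv, hA.1.eq_of_inner_right (𝕜 := ℂ) fun u hu => ?_⟩
  rw [← hA.inner_Aext_left hu hv, h u hu]

theorem IsSelfAdjointOp.mem_and_Aext_eq_of_tendsto (hA : IsSelfAdjointOp D Aop) {u : ℕ → H}
    {x w : H} (hmem : ∀ m, u m ∈ D) (hu : Tendsto u atTop (𝓝 x))
    (hAu : Tendsto (fun m => 𝐀 (u m)) atTop (𝓝 w)) : x ∈ D ∧ 𝐀 x = w :=
  hA.mem_and_Aext_eq_of_inner fun v hv => by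
    refine tendsto_nhds_unique (tendsto_const_nhds.inner hu) ?_
    simp_rw [hA.inner_Aext_left hv (hmem _)]
    exact tendsto_const_nhds.inner hAu

noncomputable def addIMul (Aop : ↥D →ₗ[ℂ] H) (t : ℝ) : ↥D →ₗ[ℂ] H :=
  Aop + ((t : ℂ) * Complex.I) • D.subtype

theorem addIMul_apply (t : ℝ) (u : D) :
    addIMul Aop t u = 𝐀 u + ((t : ℂ) * Complex.I) • (u : H) := by
  rw [Aext_of_mem u.2]
  rfl

theorem IsSelfAdjointOp.norm_addIMul_sq (hA : IsSelfAdjointOp D Aop) (t : ℝ) (u : D) :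
    ‖addIMul Aop t u‖ ^ 2 = ‖𝐀 u‖ ^ 2 + t ^ 2 * ‖(u : H)‖ ^ 2 := by
  have hre : RCLike.re ⟪𝐀 u, ((t : ℂ) * Complex.I) • (u : H)⟫_ℂ = 0 := by
    simp [RCLike.re_to_complex, hA.im_inner_Aext_self u.2]
  rw [addIMul_apply, norm_add_sq (𝕜 := ℂ), hre, norm_smul]
  simp [mul_pow]

theorem IsSelfAdjointOp.abs_mul_norm_le_norm_addIMul (hA : IsSelfAdjointOp D Aop) (t : ℝ)
    (u : D) : |t| * ‖(u : H)‖ ≤ ‖addIMul Aop t u‖ := by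
  refine abs_le_of_sq_le_sq' ?_ (norm_nonneg _) |>.2
  rw [hA.norm_addIMul_sq, mul_pow, sq_abs]
  nlinarith [sq_nonneg ‖𝐀 u‖]

theorem IsSelfAdjointOp.isClosed_range_addIMul [CompleteSpace H] (hA : IsSelfAdjointOp D Aop)
    {t : ℝ} (ht : t ≠ 0) : IsClosed (LinearMap.range (addIMul Aop t) : Set H) := by
  refine IsSeqClosed.isClosed fun ψ x hψ hlim => ?_
  choose u hu using hψ
  have hcauchy : CauchySeq fun m => (u m : H) := by
    refine Metric.cauchySeq_iff.2 fun ε hε => ?_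
    obtain ⟨N, hN⟩ := Metric.cauchySeq_iff.1 hlim.cauchySeq (|t| * ε) (by positivity)
    refine ⟨N, fun m hm l hl => ?_⟩
    have hbound := hA.abs_mul_norm_le_norm_addIMul t (u m - u l)
    rw [map_sub, hu, hu, ← dist_eq_norm] at hbound
    rw [dist_eq_norm, ← mul_lt_mul_iff_right₀ (abs_pos.2 ht)]
    exact hbound.trans_lt (hN m hm l hl)
  obtain ⟨a, ha⟩ := cauchySeq_tendsto_of_complete hcauchy
  have hAu : Tendsto (fun m => 𝐀 (u m)) atTop (𝓝 (x - ((t : ℂ) * Complex.I) • a)) := by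
    refine (hlim.sub (ha.const_smul _)).congr fun m => ?_
    rw [← hu, addIMul_apply, add_sub_cancel_right]
  obtain ⟨haD, hAa⟩ := hA.mem_and_Aext_eq_of_tendsto (fun m => (u m).2) ha hAu
  exact ⟨⟨a, haD⟩, by rw [addIMul_apply, hAa, sub_add_cancel]⟩

theorem IsSelfAdjointOp.orthogonal_range_addIMul (hA : IsSelfAdjointOp D Aop) {t : ℝ}
    (ht : t ≠ 0) : (LinearMap.range (addIMul Aop t))ᗮ = ⊥ := by
  refine (Submodule.eq_bot_iff _).2 fun v hv => ?_
  have hweak : ∀ u ∈ D, ⟪𝐀 u, v⟫_ℂ = ⟪u, ((t : ℂ) * Complex.I) • v⟫_ℂ := fun u hu => by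
    have h := Submodule.inner_right_of_mem_orthogonal (LinearMap.mem_range_self _ ⟨u, hu⟩) hv
    rw [addIMul_apply, inner_add_left, inner_smul_left] at h
    rw [inner_smul_right]
    simp only [map_mul, Complex.conj_ofReal, Complex.conj_I] at h
    linear_combination h
  obtain ⟨hvD, hAv⟩ := hA.mem_and_Aext_eq_of_inner hweak
  have h := hA.inner_Aext_left hvD hvD
  rw [hAv, inner_smul_left, inner_smul_right] at h
  simp only [map_mul, Complex.conj_ofReal, Complex.conj_I] at h
  have : (2 * (t : ℂ) * Complex.I) * ⟪v, v⟫_ℂ = 0 := by linear_combination -h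
  simpa [ht, Complex.I_ne_zero] using this

theorem IsSelfAdjointOp.bijective_addIMul [CompleteSpace H] (hA : IsSelfAdjointOp D Aop)
    {t : ℝ} (ht : t ≠ 0) : Function.Bijective (addIMul Aop t) := by
  refine ⟨(injective_iff_map_eq_zero _).2 fun u hu => ?_, LinearMap.range_eq_top.1 ?_⟩
  · have h := hA.abs_mul_norm_le_norm_addIMul t u
    rw [hu, norm_zero] at h
    simpa using nonpos_of_mul_nonpos_right h (abs_pos.2 ht)
  · rw [← (hA.isClosed_range_addIMul ht).submodule_topologicalClosure_eq,
      Submodule.topologicalClosure_eq_top_iff]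
    exact hA.orthogonal_range_addIMul ht

/-- The witness is `C = i t (A + i t)⁻¹`. -/
theorem IsSelfAdjointOp.exists_regularizer [CompleteSpace H] (hA : IsSelfAdjointOp D Aop)
    {t : ℝ} (ht : t ≠ 0) :
    ∃ C : H →ₗ[ℂ] H, (∀ ψ, C ψ ∈ D) ∧ (∀ u ∈ D, 𝐀 (C u) = C (𝐀 u)) ∧
      (∀ ψ, ‖C ψ‖ ≤ ‖ψ‖) ∧ ∀ u ∈ D, |t| * ‖C u - u‖ ≤ ‖𝐀 u‖ := by
  set c : ℂ := (t : ℂ) * Complex.I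
  set e := LinearEquiv.ofBijective _ (hA.bijective_addIMul ht)
  set R : H →ₗ[ℂ] H := D.subtype ∘ₗ e.symm.toLinearMap
  have hR_mem ψ : R ψ ∈ D := (e.symm ψ).2
  have hT_R ψ : addIMul Aop t (e.symm ψ) = ψ := e.apply_symm_apply ψ
  have hA_R ψ : 𝐀 (R ψ) = ψ - c • R ψ := by
    have h := hT_R ψ
    rw [addIMul_apply] at h
    exact eq_sub_of_add_eq h
  have hR_A {u} (hu : u ∈ D) : R (𝐀 u) = u - c • R u := by
    have h : e.symm (addIMul Aop t ⟨u, hu⟩) = ⟨u, hu⟩ := e.symm_apply_apply _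
    rw [addIMul_apply, map_add, map_smul] at h
    exact eq_sub_of_add_eq (congrArg Subtype.val h)
  have hR_norm ψ : |t| * ‖R ψ‖ ≤ ‖ψ‖ := by
    have h := hA.abs_mul_norm_le_norm_addIMul t (e.symm ψ)
    rwa [hT_R] at h
  have hc_norm : ‖c‖ = |t| := by simp [c]
  refine ⟨c • R, fun ψ => D.smul_mem c (hR_mem ψ), fun u hu => ?_, fun ψ => ?_, fun u hu => ?_⟩
  · simp only [LinearMap.smul_apply]
    rw [Aext_smul c (hR_mem u), hA_R, hR_A hu]
  · rw [LinearMap.smul_apply, norm_smul, hc_norm]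
    exact hR_norm ψ
  · have h : c • R u - u = -R (𝐀 u) := by rw [hR_A hu]; abel
    rw [LinearMap.smul_apply, h, norm_neg]
    exact hR_norm _

theorem IsSelfAdjointOp.exists_approxIdentity [CompleteSpace H] (hA : IsSelfAdjointOp D Aop) :
    ∃ C : ℕ → H →ₗ[ℂ] H, (∀ n ψ, C n ψ ∈ D) ∧ (∀ n, ∀ u ∈ D, 𝐀 (C n u) = C n (𝐀 u)) ∧
      ∀ ψ, Tendsto (fun n => C n ψ) atTop (𝓝 ψ) := by
  choose C hC_mem hC_comm hC_norm hC_near using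
    fun n : ℕ => hA.exists_regularizer (t := n + 1) (by positivity)
  refine ⟨C, hC_mem, hC_comm, tendsto_self_of_lipschitzWith_of_dense
    (fun n => AddMonoidHomClass.lipschitz_of_bound (C n) 1 (by simpa using hC_norm n)) hA.1
    fun u hu => ?_⟩
  refine tendsto_iff_norm_sub_tendsto_zero.2 <| squeeze_zero (fun _ => norm_nonneg _)
    (fun n => ?_) (by simpa using tendsto_one_div_add_atTop_nhds_zero_nat.const_mul ‖𝐀 u‖)
  have h := hC_near n u hu
  rw [abs_of_pos (by positivity)] at h
  rw [← div_eq_mul_inv, le_div_iff₀ (by positivity)]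
  linarith

theorem AdExistsN.eq_of_zero {B Z₀ : H →L[ℂ] H} (h₀ : AdExistsN D Aop 0 B Z₀) : Z₀ = B :=
  ContinuousLinearMap.ext fun ξ => ext_inner_right ℂ fun η => by
    rw [← h₀ ξ (mem_domPow_zero ξ) η (mem_domPow_zero η)]
    simp [commForm]

theorem AdExistsN.inner_eq_of_one {B Z₁ : H →L[ℂ] H} (h₁ : AdExistsN D Aop 1 B Z₁) {u v : H}
    (hu : u ∈ D) (hv : v ∈ D) : ⟪Z₁ u, v⟫_ℂ = ⟪B u, 𝐀 v⟫_ℂ - ⟪B (𝐀 u), v⟫_ℂ := by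
  rw [← h₁ u (mem_domPow_one_iff.2 hu) v (mem_domPow_one_iff.2 hv), commForm_one]

theorem AdExistsN.commForm_eq_commForm_succ {B Z₁ : H →L[ℂ] H} (h₁ : AdExistsN D Aop 1 B Z₁)
    {k : ℕ} {ξ η : H} (hξ : ξ ∈ domPow D Aop (k + 1)) (hη : η ∈ domPow D Aop (k + 1)) :
    commForm D Aop Z₁ k ξ η = commForm D Aop B (k + 1) ξ η := by
  rw [commForm_eq_sum_nsmul, commForm_eq_sum_nsmul,
    sum_range_choose_succ_nsmul fun i j => (-1) ^ i * ⟪B (𝐀^[i] ξ), 𝐀^[j] η⟫_ℂ,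
    ← sum_add_distrib]
  refine sum_congr rfl fun i hi => ?_
  have hi : i < k + 1 := mem_range.1 hi
  rw [← smul_add, h₁.inner_eq_of_one (hξ i hi) (hη (k - i) (by omega)),
    ← Function.iterate_succ_apply' (Aext D Aop) (k - i),
    ← Function.iterate_succ_apply' (Aext D Aop) i, Nat.succ_eq_add_one, Nat.succ_eq_add_one]
  congr 1
  ring

theorem IsSelfAdjointOp.mem_and_Aext_apply_of_adExistsN_one (hA : IsSelfAdjointOp D Aop)
    {B Z₁ : H →L[ℂ] H} (h₁ : AdExistsN D Aop 1 B Z₁) {ξ : H} (hξ : ξ ∈ D) :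
    B ξ ∈ D ∧ 𝐀 (B ξ) = Z₁ ξ + B (𝐀 ξ) :=
  hA.mem_and_Aext_eq_of_inner fun u hu => by
    rw [← inner_conj_symm, ← inner_conj_symm u, inner_add_left, h₁.inner_eq_of_one hξ hu,
      sub_add_cancel]

theorem IsSelfAdjointOp.adExistsN_of_domPow_succ [CompleteSpace H] (hA : IsSelfAdjointOp D Aop)
    {X W : H →L[ℂ] H} {k : ℕ}
    (h : ∀ ξ ∈ domPow D Aop (k + 1), ∀ η ∈ domPow D Aop (k + 1),
      commForm D Aop X k ξ η = ⟪W ξ, η⟫_ℂ) :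
    AdExistsN D Aop k X W := by
  intro ξ hξ η hη
  obtain ⟨C, hC_mem, hC_comm, hC_lim⟩ := hA.exists_approxIdentity
  have hform : Tendsto (fun n => commForm D Aop X k (C n ξ) (C n η)) atTop
      (𝓝 (commForm D Aop X k ξ η)) := by
    refine tendsto_finsetSum _ fun j hj => ?_
    have hj : j ≤ k := Nat.lt_succ_iff.1 (mem_range.1 hj)
    simp_rw [iterate_Aext_comm (hC_comm _) hξ hj,
      iterate_Aext_comm (hC_comm _) hη (Nat.sub_le k j)]
    exact (((X.continuous.tendsto _).comp (hC_lim _)).inner (hC_lim _)).const_mul _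
  refine tendsto_nhds_unique hform <|
    (((W.continuous.tendsto ξ).comp (hC_lim ξ)).inner (hC_lim η)).congr fun n => ?_
  exact (h _ (mem_domPow_succ_of_comm (hC_mem n) (hC_comm n) hξ)
    _ (mem_domPow_succ_of_comm (hC_mem n) (hC_comm n) hη)).symm

theorem IsSelfAdjointOp.adExistsN_of_adExistsN_one [CompleteSpace H]
    (hA : IsSelfAdjointOp D Aop) {B Z₁ W : H →L[ℂ] H} (h₁ : AdExistsN D Aop 1 B Z₁) {k : ℕ}
    (h : AdExistsN D Aop (k + 1) B W) : AdExistsN D Aop k Z₁ W :=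
  hA.adExistsN_of_domPow_succ fun ξ hξ η hη =>
    (h₁.commForm_eq_commForm_succ hξ hη).trans (h ξ hξ η hη)

end UnboundedOperator

/-- if `B ∈ C_p(A)` (with `ad_A^k B = Z k` for `k ≤ p`), then for every
`ξ ∈ Dom(A^p)` one has `Bξ ∈ Dom(A^p)` and
`A^p B ξ = Σ_{k=0}^{p} C(p,k) (ad_A^{p−k} B) A^k ξ`. -/
theorem stmt_17 {ℋ : Type*} [NormedAddCommGroup ℋ] [InnerProductSpace ℂ ℋ] [CompleteSpace ℋ]
    (D : Submodule ℂ ℋ) (Aop : ↥D →ₗ[ℂ] ℋ) (hA : IsSelfAdjointOp D Aop)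
    (p : ℕ) (B : ℋ →L[ℂ] ℋ) (Z : ℕ → ℋ →L[ℂ] ℋ)
    (hZ : ∀ k, k ≤ p → AdExistsN D Aop k B (Z k)) :
    ∀ ξ ∈ domPow D Aop p, B ξ ∈ domPow D Aop p ∧
      (Aext D Aop)^[p] (B ξ) =
        ∑ k ∈ Finset.range (p + 1), (p.choose k : ℂ) • Z (p - k) ((Aext D Aop)^[k] ξ) := by
  induction p generalizing B Z with
  | zero =>
    intro ξ _
    simp [mem_domPow_zero, (hZ 0 le_rfl).eq_of_zero]
  | succ p ih =>
    have h₁ := hZ 1 (by omega)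
    have ihB := ih B Z fun k hk => hZ k (by omega)
    have ihZ₁ := ih (Z 1) (fun k => Z (k + 1)) fun k hk =>
      hA.adExistsN_of_adExistsN_one h₁ (hZ (k + 1) (by omega))
    intro ξ hξ
    obtain ⟨hξD, hAξ⟩ := mem_domPow_succ_iff.1 hξ
    obtain ⟨hBξ, hABξ⟩ := hA.mem_and_Aext_apply_of_adExistsN_one h₁ hξD
    obtain ⟨hmem₁, heq₁⟩ := ihZ₁ ξ (domPow_antitone p.le_succ hξ)
    obtain ⟨hmem₂, heq₂⟩ := ihB (Aext D Aop ξ) hAξ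
    refine ⟨mem_domPow_succ_iff.2 ⟨hBξ, hABξ ▸ add_mem_domPow hmem₁ hmem₂⟩, ?_⟩
    rw [Function.iterate_succ_apply, hABξ, iterate_Aext_add hmem₁ hmem₂ le_rfl, heq₁, heq₂]
    simp only [Nat.cast_smul_eq_nsmul, Function.iterate_succ_apply,
      sum_range_choose_succ_nsmul fun k j => Z j ((Aext D Aop)^[k] ξ)]
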